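/- Weak duality for the commutative weighted problem: let A = A₀ + A₁x₁ + ⋯ + A_m x_m be an n×n matrix with each A_i ∈ K(t)^{n×n}, viewed over K(x₁,…,x_m)(t) with commuting variables. If P, Q ∈ GL_n(K(t)) satisfy that P A_i Q is proper (all entries in K(t)⁻) for every i = 0,…,m, then deg det A ≤ −deg det P − deg det Q. -/

import Mathlib

/-- The degree of a rational function, with `deg 0 = ⊥` (i.e. `-∞`). -/
noncomputable def degBot {K : Type*} [Field K] (f : RatFunc K) : WithBot ℤ := by
  classical exact if f = 0 then ⊥ else (f.intDegree : WithBot ℤ)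

/-- The Gauss extension of `deg` to polynomials in the commuting variables `x₁,…,x_m`
over `K(t)`: the maximum of the degrees of the `K(t)`-coefficients. -/
noncomputable def degGauss {K : Type*} [Field K] {m : ℕ}
    (p : MvPolynomial (Fin m) (RatFunc K)) : WithBot ℤ :=
  p.support.sup fun α => degBot (MvPolynomial.coeff α p)

/-!
The proper rational functions `K(t)⁻` form the valuation ring of the place at infinity, and a
polynomial in the `xᵢ` has Gauss degree `≤ 0` exactly when its coefficients lie in that ring.
Properness of every `P Aᵢ Q` makes `P A Q = P A₀ Q + ∑ xᵢ P Aᵢ Q` a matrix over the ring of such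
polynomials, so its determinant `det P · det Q · det A` has Gauss degree `≤ 0`. Since
`det P · det Q` is a nonzero constant, it shifts the Gauss degree by `deg det P + deg det Q`.
-/

open MvPolynomial WithZero

namespace Matrix

variable {n R : Type*} [CommRing R]

theorem det_mem_of_forall_mem [Fintype n] [DecidableEq n] {T : Type*} [SetLike T R]
    [SubringClass T R] {s : T} {M : Matrix n n R} (h : ∀ i j, M i j ∈ s) : M.det ∈ s := by
  rw [det_apply]
  exact sum_mem fun σ _ ↦ zsmul_mem (prod_mem fun i _ ↦ h _ _) _

variable {ι S : Type*} [Fintype ι] [CommRing S]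

def pencil (f : R →+* S) (A0 : Matrix n n R) (A : ι → Matrix n n R) (x : ι → S) :
    Matrix n n S :=
  A0.map f + ∑ k, x k • (A k).map f

theorem map_mul_pencil_mul [Fintype n] (f : R →+* S) (P Q A0 : Matrix n n R)
    (A : ι → Matrix n n R) (x : ι → S) :
    P.map f * pencil f A0 A x * Q.map f = pencil f (P * A0 * Q) (fun k ↦ P * A k * Q) x := by
  simp only [pencil, Matrix.mul_add, Matrix.add_mul, Matrix.mul_sum, Matrix.sum_mul,
    Matrix.mul_smul, Matrix.smul_mul, Matrix.map_mul]

theorem det_pencil_mul_mul [Fintype n] [DecidableEq n] (f : R →+* S) (P Q A0 : Matrix n n R)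
    (A : ι → Matrix n n R) (x : ι → S) :
    (pencil f (P * A0 * Q) (fun k ↦ P * A k * Q) x).det =
      f (P.det * Q.det) * (pencil f A0 A x).det := by
  rw [← map_mul_pencil_mul, det_mul, det_mul, map_mul, RingHom.map_det, RingHom.map_det,
    RingHom.mapMatrix_apply, RingHom.mapMatrix_apply]
  ring

theorem pencil_apply_mem {T : Type*} [SetLike T S] [SubringClass T S] {s : T} {f : R →+* S}
    {A0 : Matrix n n R} {A : ι → Matrix n n R} {x : ι → S}
    (h0 : ∀ i j, f (A0 i j) ∈ s) (hA : ∀ k i j, f (A k i j) ∈ s) (hx : ∀ k, x k ∈ s)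
    (i j : n) :
    pencil f A0 A x i j ∈ s := by
  simp only [pencil, add_apply, sum_apply, smul_apply, map_apply, smul_eq_mul]
  exact add_mem (h0 i j) (sum_mem fun k _ ↦ mul_mem (hx k) (hA k i j))

end Matrix

section Proper

variable {K : Type*} [Field K]

theorem degBot_le_coe_iff [DecidableEq (RatFunc K)] {f : RatFunc K} {c : ℤ} :
    degBot f ≤ c ↔ RatFunc.inftyValuation K f ≤ exp c := by
  rcases eq_or_ne f 0 with rfl | hf
  · simp [degBot]
  · simp [degBot, hf, RatFunc.inftyValuation_apply]

open scoped Classical in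
noncomputable def properRatFunc (K : Type*) [Field K] : Subring (RatFunc K) :=
  (RatFunc.inftyValuation K).integer

theorem mem_properRatFunc_iff {f : RatFunc K} : f ∈ properRatFunc K ↔ degBot f ≤ 0 := by
  classical
  rw [← WithBot.coe_zero, degBot_le_coe_iff, exp_zero]
  rfl

def properMvPolynomial (K σ : Type*) [Field K] : Subring (MvPolynomial σ (RatFunc K)) where
  carrier := {p | ∀ α, coeff α p ∈ properRatFunc K}
  zero_mem' _ := zero_mem _
  one_mem' α := by
    classical
    rw [coeff_one]
    split_ifs
    exacts [one_mem _, zero_mem _]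
  add_mem' hp hq α := by
    rw [coeff_add]
    exact add_mem (hp α) (hq α)
  neg_mem' hp α := by
    rw [coeff_neg]
    exact neg_mem (hp α)
  mul_mem' hp hq α := by
    classical
    rw [coeff_mul]
    exact sum_mem fun _ _ ↦ mul_mem (hp _) (hq _)

variable {σ : Type*}

theorem C_mem_properMvPolynomial {c : RatFunc K} (hc : c ∈ properRatFunc K) :
    (C c : MvPolynomial σ (RatFunc K)) ∈ properMvPolynomial K σ := by
  classical
  intro α
  rw [coeff_C]
  split_ifs
  exacts [hc, zero_mem _]

theorem X_mem_properMvPolynomial (k : σ) :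
    (X k : MvPolynomial σ (RatFunc K)) ∈ properMvPolynomial K σ := by
  classical
  intro α
  rw [coeff_X]
  split_ifs
  exacts [one_mem _, zero_mem _]

open scoped Classical in
theorem degGauss_le_of_C_mul_mem {m : ℕ} {c : RatFunc K} (hc : c ≠ 0)
    {p : MvPolynomial (Fin m) (RatFunc K)} (h : C c * p ∈ properMvPolynomial K (Fin m)) :
    degGauss p ≤ ((-c.intDegree : ℤ) : WithBot ℤ) := by
  refine Finset.sup_le fun α _ ↦ degBot_le_coe_iff.2 ?_
  have hα : c * coeff α p ∈ properRatFunc K := by simpa only [coeff_C_mul] using h α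
  rw [properRatFunc, Valuation.mem_integer_iff, map_mul, RatFunc.inftyValuation_apply,
    RatFunc.inftyValuation_of_nonzero _ hc] at hα
  rwa [← mul_le_mul_iff_right₀ (exp_pos (a := c.intDegree)), ← exp_add, add_neg_cancel,
    exp_zero]

end Proper

/-- Weak duality for the commutative weighted problem: for
`A = A₀ + A₁x₁ + ⋯ + A_m x_m` with `Aᵢ ∈ K(t)^{n×n}` and commuting variables `xᵢ`,
if `P, Q ∈ GL_n(K(t))` make every `P Aᵢ Q` proper, then
`deg det A ≤ − deg det P − deg det Q`. -/
theorem weak_duality_commutative {K : Type*} [Field K] {n m : ℕ}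
    (A0 : Matrix (Fin n) (Fin n) (RatFunc K))
    (A : Fin m → Matrix (Fin n) (Fin n) (RatFunc K))
    (P Q : Matrix (Fin n) (Fin n) (RatFunc K)) (hP : P.det ≠ 0) (hQ : Q.det ≠ 0)
    (hprop0 : ∀ i j, degBot ((P * A0 * Q) i j) ≤ 0)
    (hprop : ∀ k, ∀ i j, degBot ((P * A k * Q) i j) ≤ 0) :
    degGauss
        (Matrix.det (A0.map (fun a => (MvPolynomial.C a : MvPolynomial (Fin m) (RatFunc K))) +
          ∑ k : Fin m, (MvPolynomial.X k : MvPolynomial (Fin m) (RatFunc K)) • (A k).map (fun a => (MvPolynomial.C a : MvPolynomial (Fin m) (RatFunc K))))) ≤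
      ((- P.det.intDegree - Q.det.intDegree : ℤ) : WithBot ℤ) := by
  change degGauss (Matrix.pencil C A0 A X).det ≤ _
  have hproper : (Matrix.pencil C (P * A0 * Q) (fun k ↦ P * A k * Q) X).det
      ∈ properMvPolynomial K (Fin m) :=
    Matrix.det_mem_of_forall_mem <| Matrix.pencil_apply_mem
      (fun i j ↦ C_mem_properMvPolynomial (mem_properRatFunc_iff.2 (hprop0 i j)))
      (fun k i j ↦ C_mem_properMvPolynomial (mem_properRatFunc_iff.2 (hprop k i j)))
      X_mem_properMvPolynomial
  rw [Matrix.det_pencil_mul_mul] at hproper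
  have hdeg := degGauss_le_of_C_mul_mem (mul_ne_zero hP hQ) hproper
  rwa [RatFunc.intDegree_mul hP hQ, neg_add, ← sub_eq_add_neg] at hdeg
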